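/- arXiv:1110.5067 — 4 statements merged into one kernel-verified Lean document; each statement's English description precedes it below -/
import Mathlib

section
/- Suppose u_i = x^{a_i} y^{b_i}, i = 1,...,m, are monomials with a_1 > a_2 > ... > a_m and b_1 < b_2 < ... < b_m, all nonnegative integers. If positive integers p, q (q ≥ 0, p ≥ 1) and nonnegative integers d_1,...,d_{i-1} satisfy p·a_i + q·a_{i+1} = Σ_{k<i} d_k a_k and p·b_i + q·b_{i+1} = Σ_{k<i} d_k b_k with not all d_k zero, then b_i/a_i ≤ b_{i-1}/a_{i-1}, a contradiction when b_i/a_i > b_{i-1}/a_{i-1}. Hence no such d_k exist. -/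
/-! Every earlier monomial `u_k`, `k < i`, has slope `b_k / a_k` strictly below `b_i / a_i`, so the
weighted sum `∑ d_k (a_k, b_k)` has slope strictly below `b_i / a_i` as soon as some `d_k ≠ 0`.
The vector `p (a_i, b_i) + q (a_(i+1), b_(i+1))` has slope at least `b_i / a_i`, because
`b_(i+1) / a_(i+1) > b_i / a_i`. All slopes are compared by cross-multiplication, so no division
occurs. -/

theorem Finset.sum_mul_lt_mul_sum_of_forall_lt {ι : Type*} {s : Finset ι} {d x y : ι → ℕ}
    {u v : ℕ} (h : ∀ k ∈ s, x k * u < v * y k) (hd : ∃ k ∈ s, d k ≠ 0) :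
    (∑ k ∈ s, d k * x k) * u < v * ∑ k ∈ s, d k * y k := by
  rw [Finset.sum_mul, Finset.mul_sum]
  obtain ⟨k₀, hk₀, hdk₀⟩ := hd
  refine Finset.sum_lt_sum (fun k hk => ?_) ⟨k₀, hk₀, ?_⟩
  · calc d k * x k * u = d k * (x k * u) := mul_assoc _ _ _
      _ ≤ d k * (v * y k) := Nat.mul_le_mul_left _ (h k hk).le
      _ = v * (d k * y k) := by ring
  · calc d k₀ * x k₀ * u = d k₀ * (x k₀ * u) := mul_assoc _ _ _
      _ < d k₀ * (v * y k₀) := Nat.mul_lt_mul_of_pos_left (h k₀ hk₀) (Nat.pos_of_ne_zero hdk₀)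
      _ = v * (d k₀ * y k₀) := by ring

theorem stmt_8_general (i p q : ℕ) (a b d : ℕ → ℕ)
    (hi1 : 1 < i)
    (ha : ∀ k, 1 ≤ k → k ≤ i → a (k + 1) < a k)
    (hb : ∀ k, 1 ≤ k → k ≤ i → b k < b (k + 1))
    (heqa : p * a i + q * a (i + 1) = ∑ k ∈ Finset.Ico 1 i, d k * a k)
    (heqb : p * b i + q * b (i + 1) = ∑ k ∈ Finset.Ico 1 i, d k * b k)
    (hd : ∃ k ∈ Finset.Ico 1 i, d k ≠ 0) :
    False := by
  have ha_anti : StrictAntiOn a (Set.Icc 1 (i + 1)) :=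
    strictAntiOn_of_add_one_lt Set.ordConnected_Icc fun k _ hk hk' =>
      ha k hk.1 (Nat.le_of_succ_le_succ hk'.2)
  have hb_mono : StrictMonoOn b (Set.Icc 1 (i + 1)) :=
    strictMonoOn_of_lt_add_one Set.ordConnected_Icc fun k _ hk hk' =>
      hb k hk.1 (Nat.le_of_succ_le_succ hk'.2)
  have hslope : ∀ k ∈ Finset.Ico 1 i, b k * a i < b i * a k := by
    intro k hk
    rw [Finset.mem_Ico] at hk
    have hk_mem : k ∈ Set.Icc 1 (i + 1) := ⟨hk.1, by lia⟩
    have hi_mem : i ∈ Set.Icc 1 (i + 1) := ⟨by lia, by lia⟩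
    exact mul_lt_mul'' (hb_mono hk_mem hi_mem hk.2) (ha_anti hk_mem hi_mem hk.2)
      (Nat.zero_le _) (Nat.zero_le _)
  have hnext : a (i + 1) * b i ≤ a i * b (i + 1) :=
    Nat.mul_le_mul (ha i (by lia) le_rfl).le (hb i (by lia) le_rfl).le
  have hsum := Finset.sum_mul_lt_mul_sum_of_forall_lt hslope hd
  rw [← heqa, ← heqb] at hsum
  nlinarith [Nat.mul_le_mul_left q hnext]

/-- Let `u_k = x^(a_k) y^(b_k)` be monomials with strictly decreasing `a` and strictly
increasing `b` exponents (on the relevant range of indices).  If `p ≥ 1`, `q ≥ 0` and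
nonnegative integers `d_1, …, d_(i-1)`, not all zero, satisfy
`p·a_i + q·a_(i+1) = Σ_(k<i) d_k a_k` and `p·b_i + q·b_(i+1) = Σ_(k<i) d_k b_k`,
then we reach a contradiction (since `b_i/a_i > b_(i-1)/a_(i-1)`): no such `d_k` exist. -/
theorem stmt_8 (m i p q : ℕ) (a b d : ℕ → ℕ)
    (hi1 : 1 < i) (him : i ≤ m)
    (ha : ∀ k, 1 ≤ k → k ≤ i → a (k + 1) < a k)
    (hb : ∀ k, 1 ≤ k → k ≤ i → b k < b (k + 1))
    (hai : 0 < a i)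
    (hp : 1 ≤ p)
    (heqa : p * a i + q * a (i + 1) = ∑ k ∈ Finset.Ico 1 i, d k * a k)
    (heqb : p * b i + q * b (i + 1) = ∑ k ∈ Finset.Ico 1 i, d k * b k)
    (hd : ∃ k ∈ Finset.Ico 1 i, d k ≠ 0) :
    False :=
  stmt_8_general i p q a b d hi1 ha hb heqa heqb hd
end

section
/- With G acting on F[x,y,z] as above (0 < b,c,d < n, n | b+c+d), every minimal monomial generator of the invariant ring F[x,y,z]^G other than xyz involves at most two of the three variables. -/
open MvPolynomial

/-!
An invariant monomial `x^p y^q z^r` is one with `n ∣ b p + c q + d r`. If `p, q, r` are all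
positive, then since `n ∣ b + c + d` the quotient `x^(p-1) y^(q-1) z^(r-1)` is again invariant,
so the monomial splits off the invariant factor `xyz`; minimality forces the quotient to be
constant, i.e. the monomial to be `xyz` itself.
-/

theorem MvPolynomial.C_mul_eq_self_iff {ι R : Type*} [CommRing R] [IsDomain R] {u : R}
    {f : MvPolynomial ι R} (hf : f ≠ 0) : C u * f = f ↔ u = 1 := by
  conv_lhs => rhs; rw [← one_mul f]
  rw [mul_left_inj' hf, ← C_1, C_inj]

theorem MvPolynomial.aeval_diagonal_monomial {R : Type*} [CommSemiring R] (a₀ a₁ a₂ : R)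
    (p q r : ℕ) :
    aeval (R := R) (![C a₀ * X 0, C a₁ * X 1, C a₂ * X 2] : Fin 3 → MvPolynomial (Fin 3) R)
        (X 0 ^ p * X 1 ^ q * X 2 ^ r) =
      C (a₀ ^ p * a₁ ^ q * a₂ ^ r) * (X 0 ^ p * X 1 ^ q * X 2 ^ r) := by
  simp only [map_mul, map_pow, aeval_X, Matrix.cons_val_zero, Matrix.cons_val_one,
    Matrix.cons_val_two, Matrix.head_cons, Matrix.tail_cons, mul_pow]
  ring

theorem IsPrimitiveRoot.aeval_diagonal_monomial_eq_self_iff {R : Type*} [CommRing R]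
    [IsDomain R] {ε : R} {n : ℕ} (hε : IsPrimitiveRoot ε n) (b c d p q r : ℕ) :
    aeval (R := R)
        (![C (ε ^ b) * X 0, C (ε ^ c) * X 1, C (ε ^ d) * X 2] : Fin 3 → MvPolynomial (Fin 3) R)
        (X 0 ^ p * X 1 ^ q * X 2 ^ r) = X 0 ^ p * X 1 ^ q * X 2 ^ r
      ↔ n ∣ b * p + c * q + d * r := by
  have hmono : (X 0 ^ p * X 1 ^ q * X 2 ^ r : MvPolynomial (Fin 3) R) ≠ 0 := by
    simp [X_ne_zero]
  rw [aeval_diagonal_monomial, C_mul_eq_self_iff hmono, ← pow_mul, ← pow_mul, ← pow_mul,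
    ← pow_add, ← pow_add, hε.pow_eq_one_iff_dvd]

theorem stmt_12_general (F : Type*) [Field F] (n b c d : ℕ)
    (ε : F) (hε : IsPrimitiveRoot ε n)
    (hbcd : n ∣ b + c + d)
    (σ : MvPolynomial (Fin 3) F →ₐ[F] MvPolynomial (Fin 3) F)
    (hσ : σ = aeval ![C (ε ^ b) * X 0, C (ε ^ c) * X 1, C (ε ^ d) * X 2])
    (Inv : ℕ → ℕ → ℕ → Prop)
    (hInv : ∀ p q r, Inv p q r ↔
      σ (X 0 ^ p * X 1 ^ q * X 2 ^ r) = X 0 ^ p * X 1 ^ q * X 2 ^ r)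
    (p q r : ℕ) (hpqr : Inv p q r)
    (hne : ¬(p = 1 ∧ q = 1 ∧ r = 1))
    (hmin : ¬ ∃ p₁ q₁ r₁ p₂ q₂ r₂ : ℕ,
      p₁ + p₂ = p ∧ q₁ + q₂ = q ∧ r₁ + r₂ = r ∧
      Inv p₁ q₁ r₁ ∧ Inv p₂ q₂ r₂ ∧
      ¬(p₁ = 0 ∧ q₁ = 0 ∧ r₁ = 0) ∧ ¬(p₂ = 0 ∧ q₂ = 0 ∧ r₂ = 0)) :
    p = 0 ∨ q = 0 ∨ r = 0 := by
  have hInv_iff (p q r : ℕ) : Inv p q r ↔ n ∣ b * p + c * q + d * r := by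
    rw [hInv, hσ]
    exact hε.aeval_diagonal_monomial_eq_self_iff b c d p q r
  by_contra! hpos
  obtain ⟨hp, hq, hr⟩ := hpos
  obtain ⟨p', rfl⟩ := Nat.exists_eq_succ_of_ne_zero hp
  obtain ⟨q', rfl⟩ := Nat.exists_eq_succ_of_ne_zero hq
  obtain ⟨r', rfl⟩ := Nat.exists_eq_succ_of_ne_zero hr
  refine hmin ⟨p', q', r', 1, 1, 1, rfl, rfl, rfl, ?_, by simpa [hInv_iff] using hbcd, ?_,
    by simp⟩
  · have hdvd := (hInv_iff _ _ _).mp hpqr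
    rw [show b * (p' + 1) + c * (q' + 1) + d * (r' + 1)
        = b * p' + c * q' + d * r' + (b + c + d) by ring] at hdvd
    exact (hInv_iff _ _ _).mpr ((Nat.dvd_add_left hbcd).mp hdvd)
  · rintro ⟨rfl, rfl, rfl⟩
    exact hne ⟨rfl, rfl, rfl⟩

/-- With the generator `σ` of the cyclic group of order `n` acting on `F[x,y,z]` by
`σ·x = ε^b x`, `σ·y = ε^c y`, `σ·z = ε^d z` (`0 < b,c,d < n`, `n ∣ b+c+d`), every
minimal monomial generator of the invariant ring other than `xyz` — i.e. every
invariant monomial `x^p y^q z^r ≠ xyz`, nonconstant, that is not a product of two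
nonconstant invariant monomials — involves at most two of the three variables. -/
theorem stmt_12 (F : Type*) [Field F] (n b c d : ℕ)
    (ε : F) (hε : IsPrimitiveRoot ε n)
    (hb : 0 < b) (hbn : b < n) (hc : 0 < c) (hcn : c < n)
    (hd : 0 < d) (hdn : d < n) (hbcd : n ∣ b + c + d)
    (σ : MvPolynomial (Fin 3) F →ₐ[F] MvPolynomial (Fin 3) F)
    (hσ : σ = aeval ![C (ε ^ b) * X 0, C (ε ^ c) * X 1, C (ε ^ d) * X 2])
    (Inv : ℕ → ℕ → ℕ → Prop)
    (hInv : ∀ p q r, Inv p q r ↔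
      σ (X 0 ^ p * X 1 ^ q * X 2 ^ r) = X 0 ^ p * X 1 ^ q * X 2 ^ r)
    (p q r : ℕ) (hpqr : Inv p q r)
    (hnonconst : ¬(p = 0 ∧ q = 0 ∧ r = 0))
    (hne : ¬(p = 1 ∧ q = 1 ∧ r = 1))
    (hmin : ¬ ∃ p₁ q₁ r₁ p₂ q₂ r₂ : ℕ,
      p₁ + p₂ = p ∧ q₁ + q₂ = q ∧ r₁ + r₂ = r ∧
      Inv p₁ q₁ r₁ ∧ Inv p₂ q₂ r₂ ∧
      ¬(p₁ = 0 ∧ q₁ = 0 ∧ r₁ = 0) ∧ ¬(p₂ = 0 ∧ q₂ = 0 ∧ r₂ = 0)) :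
    p = 0 ∨ q = 0 ∨ r = 0 :=
  stmt_12_general F n b c d ε hε hbcd σ hσ Inv hInv p q r hpqr hne hmin
end

section
/- For m ≥ 3, the sum over all (i+2)-element subsets Y of the vertices of the m-cycle C_m, for 0 ≤ i ≤ m-4, of (number of connected components of the induced subgraph C_m[Y] minus 1) equals (i+1)·binom(m, i+2) - m·binom(m-2, i). -/
/-!
Cut the cycle at a vertex `a ∉ Y`. Then `C_m[Y]` falls apart into runs of consecutive vertices,
each beginning at a vertex `k ∈ Y` with `k - 1 ∉ Y`, so its number of components is
`#Y - #{k ∈ Y | k - 1 ∈ Y}`, the number of vertices minus the number of edges of this forest.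
Summing over all `(i+2)`-sets `Y`, each of the `m` edges `{k - 1, k}` of the cycle lies in
`C(m-2, i)` of them.
-/

open Finset SimpleGraph

theorem fromRel_succ_mod_eq_cycleGraph {n : ℕ} :
    fromRel (fun a b : Fin (n + 2) => (a.val + 1) % (n + 2) = b.val) = cycleGraph (n + 2) := by
  have hsucc (a b : Fin (n + 2)) : (a.val + 1) % (n + 2) = b.val ↔ b - a = 1 := by
    rw [sub_eq_iff_eq_add', Fin.ext_iff, Fin.val_add, Fin.val_one, eq_comm]
  ext a b
  simp only [fromRel_adj, hsucc, cycleGraph_adj]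
  refine ⟨fun h ↦ h.2.symm, fun h ↦ ⟨?_, h.symm⟩⟩
  rintro rfl
  simp at h

lemma card_filter_powersetCard_mem_and_mem {α : Type*} [Fintype α] [DecidableEq α] {a b : α}
    (hab : a ≠ b) (i : ℕ) :
    #{Y ∈ (univ : Finset α).powersetCard (i + 2) | a ∈ Y ∧ b ∈ Y}
      = (Fintype.card α - 2).choose i := by
  have hpair (Y : Finset α) : (a ∈ Y ∧ b ∈ Y) ↔ {a, b} ⊆ Y := by
    simp [insert_subset_iff]
  simp_rw [hpair]
  rw [card_filter_powersetCard_subset _ _ _ (subset_univ _) (by rw [card_pair hab]; omega),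
    card_pair hab, card_univ, Nat.add_sub_cancel]

section CycleRuns

variable {n : ℕ}

lemma val_add_one_sub_of_ne {a v : Fin (n + 2)} (h : v + 1 ≠ a) :
    (v + 1 - a).val = (v - a).val + 1 := by
  rw [add_sub_right_comm]
  refine Fin.val_add_one_of_lt (Fin.lt_last_iff_ne_last.mpr fun hl ↦ h ?_)
  rw [← sub_eq_zero, add_sub_right_comm, hl, Fin.last_add_one]

/-- The first vertices of the maximal runs of cyclically consecutive elements of `Y`. -/
def runStarts (Y : Finset (Fin (n + 2))) : Finset (Fin (n + 2)) := {k ∈ Y | k - 1 ∉ Y}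

lemma card_runStarts_add_card (Y : Finset (Fin (n + 2))) :
    #(runStarts Y) + #{k ∈ Y | k - 1 ∈ Y} = #Y := by
  rw [add_comm]
  exact card_filter_add_card_filter_not _

/-- The number of run starts met when walking up from the cut point `a` to `v`. It is constant
along the edges of `C[Y]` and strictly increasing along run starts, which separates the runs. -/
def runRank (Y : Finset (Fin (n + 2))) (a v : Fin (n + 2)) : ℕ :=
  #{k ∈ runStarts Y | (k - a).val ≤ (v - a).val}

lemma sum_card_filter_sub_one_mem (i : ℕ) :
    ∑ Y ∈ (univ : Finset (Fin (n + 2))).powersetCard (i + 2), #{k ∈ Y | k - 1 ∈ Y}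
      = (n + 2) * n.choose i := by
  have hfilter (Y : Finset (Fin (n + 2))) :
      {k ∈ Y | k - 1 ∈ Y} = univ.bipartiteAbove (fun Y k ↦ k - 1 ∈ Y ∧ k ∈ Y) Y := by
    ext k
    simp [bipartiteAbove, and_comm]
  simp_rw [hfilter]
  rw [sum_card_bipartiteAbove_eq_sum_card_bipartiteBelow]
  simp only [bipartiteBelow]
  rw [sum_congr rfl fun k _ ↦
    card_filter_powersetCard_mem_and_mem (fun h ↦ one_ne_zero (sub_eq_self.mp h)) i]
  simp

variable {Y : Finset (Fin (n + 2))} {a : Fin (n + 2)}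

lemma runRank_add_one (ha : a ∉ Y) {v : Fin (n + 2)} (hv : v ∈ Y) (hv1 : v + 1 ∈ Y) :
    runRank Y a (v + 1) = runRank Y a v := by
  rw [runRank, runRank, val_add_one_sub_of_ne (ne_of_mem_of_not_mem hv1 ha)]
  congr 1
  refine filter_congr fun k hk ↦ ⟨fun hle ↦ ?_, fun hle ↦ by omega⟩
  refine (Nat.lt_or_eq_of_le hle).elim Nat.le_of_lt_succ fun heq ↦ ?_
  rw [← val_add_one_sub_of_ne (ne_of_mem_of_not_mem hv1 ha)] at heq
  obtain rfl : k = v + 1 := sub_left_inj.mp (Fin.ext heq)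
  exact absurd (by simpa using hv) (mem_filter.mp hk).2

lemma runRank_eq_of_reachable (ha : a ∉ Y) {x y : (Y : Set (Fin (n + 2)))}
    (h : ((cycleGraph (n + 2)).induce (Y : Set (Fin (n + 2)))).Reachable x y) :
    runRank Y a x = runRank Y a y := by
  rw [reachable_iff_reflTransGen] at h
  induction h with
  | refl => rfl
  | @tail u w _ huw ih =>
    rw [ih]
    rcases cycleGraph_adj.mp (induce_adj.mp huw) with h | h <;> rw [sub_eq_iff_eq_add'] at h
    · have hw1 : (w : Fin (n + 2)) + 1 ∈ Y := h ▸ u.2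
      have hrank := congrArg (runRank Y a) h
      rwa [runRank_add_one ha w.2 hw1] at hrank
    · have hu1 : (u : Fin (n + 2)) + 1 ∈ Y := h ▸ w.2
      have hrank := congrArg (runRank Y a) h
      rw [runRank_add_one ha u.2 hu1] at hrank
      exact hrank.symm

lemma runRank_lt_runRank {k k' : Fin (n + 2)} (hk' : k' ∈ runStarts Y)
    (h : (k - a).val < (k' - a).val) : runRank Y a k < runRank Y a k' := by
  refine card_lt_card ((ssubset_iff_of_subset fun x hx ↦ ?_).mpr ⟨k', ?_, ?_⟩)
  · simp only [mem_filter] at hx ⊢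
    exact ⟨hx.1, by omega⟩
  · exact mem_filter.mpr ⟨hk', le_rfl⟩
  · simp only [mem_filter, not_and, not_le]
    exact fun _ ↦ h

lemma eq_of_reachable_of_mem_runStarts (ha : a ∉ Y) {k k' : Fin (n + 2)}
    (hk : k ∈ runStarts Y) (hk' : k' ∈ runStarts Y)
    (h : ((cycleGraph (n + 2)).induce (Y : Set (Fin (n + 2)))).Reachable
      ⟨k, (mem_filter.mp hk).1⟩ ⟨k', (mem_filter.mp hk').1⟩) : k = k' := by
  have hrank := runRank_eq_of_reachable ha h
  refine (sub_left_inj (a := a)).mp (Fin.ext ?_)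
  rcases lt_trichotomy (k - a).val (k' - a).val with hlt | heq | hgt
  · exact absurd hrank (runRank_lt_runRank hk' hlt).ne
  · exact heq
  · exact absurd hrank (runRank_lt_runRank hk hgt).ne'

lemma exists_mem_runStarts_reachable (ha : a ∉ Y) (v : (Y : Set (Fin (n + 2)))) :
    ∃ (k : Fin (n + 2)) (hk : k ∈ runStarts Y),
      ((cycleGraph (n + 2)).induce (Y : Set (Fin (n + 2)))).Reachable
        ⟨k, (mem_filter.mp hk).1⟩ v := by
  obtain ⟨v, hv⟩ := v
  induction h : (v - a).val using Nat.strong_induction_on generalizing v with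
  | _ p ih =>
    by_cases hv1 : v - 1 ∈ Y
    · have hpos := val_add_one_sub_of_ne (a := a) (v := v - 1)
        (by rw [sub_add_cancel]; exact ne_of_mem_of_not_mem hv ha)
      rw [sub_add_cancel] at hpos
      obtain ⟨k, hk, hreach⟩ := ih _ (by omega) (v - 1) hv1 rfl
      exact ⟨k, hk, hreach.trans (Adj.reachable
        (cycleGraph_adj.mpr (Or.inr (sub_sub_cancel v 1))))⟩
    · exact ⟨v, mem_filter.mpr ⟨hv, hv1⟩, Reachable.refl _⟩

theorem card_connectedComponent_induce_cycleGraph (ha : a ∉ Y) :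
    Nat.card ((cycleGraph (n + 2)).induce (Y : Set (Fin (n + 2)))).ConnectedComponent
      = #(runStarts Y) := by
  let f : runStarts Y →
      ((cycleGraph (n + 2)).induce (Y : Set (Fin (n + 2)))).ConnectedComponent :=
    fun k ↦ connectedComponentMk _ ⟨k, (mem_filter.mp k.2).1⟩
  have hf : f.Bijective := by
    refine ⟨fun k k' h ↦ Subtype.ext
      (eq_of_reachable_of_mem_runStarts ha k.2 k'.2 (ConnectedComponent.exact h)), fun c ↦ ?_⟩
    obtain ⟨v, rfl⟩ := c.exists_rep
    obtain ⟨k, hk, hreach⟩ := exists_mem_runStarts_reachable ha v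
    exact ⟨⟨k, hk⟩, ConnectedComponent.sound hreach⟩
  rw [← Nat.card_eq_of_bijective f hf, Nat.card_eq_finsetCard]

theorem card_connectedComponent_induce_cycleGraph_add (hY : Y ≠ univ) :
    Nat.card ((cycleGraph (n + 2)).induce (Y : Set (Fin (n + 2)))).ConnectedComponent
      + #{k ∈ Y | k - 1 ∈ Y} = #Y := by
  obtain ⟨a, ha⟩ : ∃ a, a ∉ Y := by simpa [eq_univ_iff_forall] using hY
  rw [card_connectedComponent_induce_cycleGraph ha, card_runStarts_add_card]

end CycleRuns

/-- For `m ≥ 3` and `0 ≤ i ≤ m - 4`, the sum over all `(i+2)`-element subsets `Y`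
of the vertices of the `m`-cycle `C_m` of (number of connected components of the
induced subgraph `C_m[Y]`, minus 1) equals `(i+1)·C(m, i+2) - m·C(m-2, i)`. -/
theorem stmt_13 (m i : ℕ) (hm : 3 ≤ m) (hi : i ≤ m - 4)
    (C : SimpleGraph (Fin m))
    (hC : C = SimpleGraph.fromRel (fun a b : Fin m => (a.val + 1) % m = b.val)) :
    ∑ Y ∈ (Finset.univ : Finset (Fin m)).powersetCard (i + 2),
        (Nat.card (C.induce (Y : Set (Fin m))).ConnectedComponent - 1)
      = (i + 1) * m.choose (i + 2) - m * (m - 2).choose i := by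
  obtain ⟨n, rfl⟩ : ∃ n, m = n + 2 := ⟨m - 2, by omega⟩
  rw [hC, fromRel_succ_mod_eq_cycleGraph, Nat.add_sub_cancel]
  have hterm (Y : Finset (Fin (n + 2))) (hY : Y ∈ univ.powersetCard (i + 2)) :
      Nat.card ((cycleGraph (n + 2)).induce (Y : Set (Fin (n + 2)))).ConnectedComponent - 1
        = (i + 1) - #{k ∈ Y | k - 1 ∈ Y} ∧ #{k ∈ Y | k - 1 ∈ Y} ≤ i + 1 := by
    rw [mem_powersetCard_univ] at hY
    have hproper : Y ≠ univ := by
      rintro rfl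
      simp at hY
      omega
    have : Nonempty (Y : Set (Fin (n + 2))) := (card_pos.mp (by omega)).coe_sort
    have hpos : 0 < Nat.card
        ((cycleGraph (n + 2)).induce (Y : Set (Fin (n + 2)))).ConnectedComponent := Nat.card_pos
    have hsplit := card_connectedComponent_induce_cycleGraph_add hproper
    omega
  rw [sum_congr rfl fun Y h ↦ (hterm Y h).1, sum_tsub_distrib _ fun Y h ↦ (hterm Y h).2,
    sum_card_filter_sub_one_mem, sum_const, card_powersetCard, card_univ, Fintype.card_fin,
    smul_eq_mul, mul_comm]
end

section
/- For m ≥ 4 the sequence of Betti numbers β_i = (i+1)·binom(m, i+2) - m·binom(m-2, i) for 0 ≤ i ≤ m-4, extended by β_{-1} = 1 and β_{m-3} = 1, is symmetric: β_i = β_{m-4-i} for 0 ≤ i ≤ m-4. -/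
/-!
Write `m = i + j + 4`. Since `C(m, i+2) = C(m, j+2)` and `C(m-2, j) = C(m-2, i+2)`, the symmetry
`β_i = β_j` amounts to `(i - j) C(m, i+2) = m (C(m-2, i) - C(m-2, i+2))`. Absorption gives
`m C(m-1, i+1) = (i+2) C(m, i+2)` and `m C(m-1, i+2) = (j+2) C(m, i+2)`, so the left side is
`m (C(m-1, i+1) - C(m-1, i+2))`, and Pascal's rule applied to both terms turns this into the right side.
-/

def bettiNumber (m i : ℕ) : ℤ :=
  ((i : ℤ) + 1) * m.choose (i + 2) - m * (m - 2).choose i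

theorem Nat.choose_succ_sub_choose_succ_succ (n k : ℕ) :
    ((n + 1).choose (k + 1) : ℤ) - (n + 1).choose (k + 2) = n.choose k - n.choose (k + 2) := by
  rw [Nat.choose_succ_succ', Nat.choose_succ_succ' n (k + 1)]
  push_cast
  ring

theorem Nat.mul_choose_sub_choose_succ (a b : ℕ) :
    ((a + b + 2 : ℕ) : ℤ) * ((a + b + 1).choose a - (a + b + 1).choose (a + 1))
      = ((a : ℤ) - b) * (a + b + 2).choose (a + 1) := by
  have lower := Nat.add_one_mul_choose_eq (a + b + 1) a
  have upper := Nat.choose_mul_succ_eq (a + b + 1) (a + 1)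
  rw [show a + b + 1 + 1 - (a + 1) = b + 1 by omega] at upper
  have lower' : ((a + b + 2 : ℕ) : ℤ) * (a + b + 1).choose a
      = (a + b + 2).choose (a + 1) * ((a : ℤ) + 1) := by exact_mod_cast lower
  have upper' : ((a + b + 1).choose (a + 1) : ℤ) * (a + b + 2 : ℕ)
      = (a + b + 2).choose (a + 1) * ((b : ℤ) + 1) := by exact_mod_cast upper
  linear_combination lower' - upper'

theorem bettiNumber_symm (i j : ℕ) : bettiNumber (i + j + 4) i = bettiNumber (i + j + 4) j := by
  have absorb : ((i : ℤ) + j + 4) * ((i + j + 3).choose (i + 1) - (i + j + 3).choose (i + 2))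
      = ((i : ℤ) - j) * (i + j + 4).choose (i + 2) := by
    have h := Nat.mul_choose_sub_choose_succ (i + 1) (j + 1)
    rw [show i + 1 + (j + 1) + 1 = i + j + 3 by omega, show i + 1 + (j + 1) + 2 = i + j + 4 by omega]
      at h
    push_cast at h
    linear_combination h
  have pascal : ((i + j + 3).choose (i + 1) : ℤ) - (i + j + 3).choose (i + 2)
      = (i + j + 2).choose i - (i + j + 2).choose (i + 2) :=
    Nat.choose_succ_sub_choose_succ_succ (i + j + 2) i
  unfold bettiNumber
  rw [show i + j + 4 - 2 = i + j + 2 by omega,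
    Nat.choose_symm_of_eq_add (show i + j + 4 = (j + 2) + (i + 2) by omega),
    Nat.choose_symm_of_eq_add (show i + j + 2 = j + (i + 2) by omega)]
  push_cast
  linear_combination ((i : ℤ) + j + 4) * pascal - absorb

theorem stmt_15_general (m i : ℕ) (hi : i ≤ m - 4) :
    ((i : ℤ) + 1) * m.choose (i + 2) - m * (m - 2).choose i
      = ((m - 4 - i : ℕ) + 1 : ℤ) * m.choose ((m - 4 - i) + 2)
        - m * (m - 2).choose (m - 4 - i) := by
  change bettiNumber m i = bettiNumber m (m - 4 - i)
  obtain hm | hm := lt_or_ge m 4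
  · -- truncated subtraction: here `i = 0 = m - 4 - i`
    rw [show m - 4 - i = i by omega]
  · obtain ⟨j, rfl⟩ : ∃ j, m = i + j + 4 := ⟨m - 4 - i, by omega⟩
    rw [show i + j + 4 - 4 - i = j by omega]
    exact bettiNumber_symm i j

/-- For `m ≥ 4`, the Betti numbers `β_i = (i+1)·C(m, i+2) - m·C(m-2, i)` for
`0 ≤ i ≤ m - 4` (extended by `β₋₁ = β_(m-3) = 1`) are symmetric:
`β_i = β_(m-4-i)`. -/
theorem stmt_15 (m i : ℕ) (hm : 4 ≤ m) (hi : i ≤ m - 4) :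
    ((i : ℤ) + 1) * m.choose (i + 2) - m * (m - 2).choose i
      = ((m - 4 - i : ℕ) + 1 : ℤ) * m.choose ((m - 4 - i) + 2)
        - m * (m - 2).choose (m - 4 - i) :=
  stmt_15_general m i hi
end
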